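/- arXiv:1211.6037 — 3 statements merged into one kernel-verified Lean document; each statement's English description precedes it below -/
import Mathlib

section
/- Suppose functions g_n : [0,∞) → ℝ (n ≥ 1) satisfy g_1' = -g_1 + αβ and, for n ≥ 2 with the convention g_0 ≡ α+β, the ODE g_n' = -n[g_n - ∑_{j=1}^{n-1}(g_j - g_{j-1})g_{n-j}], with all functions continuous on [0,∞) and differentiable on (0,∞). Then each g_n is a polynomial in t and e^{-t}; that is, there exists a polynomial P_n in two variables with real coefficients such that g_n(t) = P_n(t, e^{-t}) for all t ≥ 0. -/
/-!
The curve `t ↦ (t, e^{-t})` solves the polynomial ODE `x₀' = 1, x₁' = -x₁`, so `d/dt` acts on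
polynomials in `t` and `e^{-t}` through the derivation `D = ∂₀ - X₁ ∂₁` of `ℝ[X₀, X₁]`.
Each `gₙ` solves `gₙ' = -n gₙ + qₙ`, where by strong induction the forcing term `qₙ` (built
from `g₀, …, g_{n-1}`) is a polynomial in `t, e^{-t}`. Since `D + n` is surjective on
`ℝ[X₀, X₁]`, there is a polynomial particular solution, and the remaining homogeneous part
is a multiple of `e^{-nt} = (e^{-t})ⁿ`.
-/

open MvPolynomial Set

section

variable {α σ R : Type*} [CommSemiring R]

def polynomialsAlong (x : α → σ → R) (s : Set α) : Subalgebra R (α → R) where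
  carrier := {f | ∃ P : MvPolynomial σ R, EqOn f (fun a => eval (x a) P) s}
  mul_mem' := by
    rintro f g ⟨P, hP⟩ ⟨Q, hQ⟩
    exact ⟨P * Q, fun a ha => by simp [hP ha, hQ ha]⟩
  add_mem' := by
    rintro f g ⟨P, hP⟩ ⟨Q, hQ⟩
    exact ⟨P + Q, fun a ha => by simp [hP ha, hQ ha]⟩
  algebraMap_mem' r := ⟨C r, fun a _ => by simp⟩

theorem mem_polynomialsAlong {x : α → σ → R} {s : Set α} {f : α → R} :
    f ∈ polynomialsAlong x s ↔ ∃ P : MvPolynomial σ R, EqOn f (fun a => eval (x a) P) s :=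
  Iff.rfl

end

theorem MvPolynomial.hasDerivAt_eval_mkDerivation {σ : Type*} {x : ℝ → σ → ℝ}
    {v : σ → MvPolynomial σ ℝ} {t : ℝ}
    (hx : ∀ i, HasDerivAt (fun s => x s i) (eval (x t) (v i)) t) (P : MvPolynomial σ ℝ) :
    HasDerivAt (fun s => eval (x s) P) (eval (x t) (mkDerivation ℝ v P)) t := by
  induction P using MvPolynomial.induction_on with
  | C a => simpa [← algebraMap_eq] using hasDerivAt_const t a
  | add p q hp hq => simpa only [map_add] using hp.fun_add hq
  | mul_X p i hp =>
    simpa only [map_mul, eval_X, Derivation.leibniz, mkDerivation_X, smul_eq_mul, map_add,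
      add_comm, mul_comm] using hp.fun_mul (hx i)

/-- `d/dt` transported along `t ↦ (t, e^{-t})`: `X₀ ↦ 1`, `X₁ ↦ -X₁`. -/
noncomputable def expDerivation :
    Derivation ℝ (MvPolynomial (Fin 2) ℝ) (MvPolynomial (Fin 2) ℝ) :=
  mkDerivation ℝ ![1, -X 1]

noncomputable def expPolynomials : Subalgebra ℝ (ℝ → ℝ) :=
  polynomialsAlong (fun t => ![t, Real.exp (-t)]) (Ici 0)

theorem hasDerivAt_eval_exp (P : MvPolynomial (Fin 2) ℝ) (t : ℝ) :
    HasDerivAt (fun s => eval ![s, Real.exp (-s)] P)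
      (eval ![t, Real.exp (-t)] (expDerivation P)) t := by
  refine hasDerivAt_eval_mkDerivation (fun i => ?_) P
  fin_cases i
  · simpa using hasDerivAt_id' t
  · simpa using (hasDerivAt_neg t).exp

theorem expDerivation_X_pow_mul_X_pow (a b : ℕ) :
    expDerivation (X 0 ^ a * X 1 ^ b) =
      (a : ℝ) • (X 0 ^ (a - 1) * X 1 ^ b) - (b : ℝ) • (X 0 ^ a * X 1 ^ b) := by
  simp only [expDerivation, Derivation.leibniz, Derivation.leibniz_pow, mkDerivation_X,
    Matrix.cons_val_zero, Matrix.cons_val_one, Matrix.cons_val_fin_one, smul_eq_mul, nsmul_eq_mul]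
  simp only [Algebra.smul_def, map_natCast]
  rcases b with _ | b
  · simp
  · rw [Nat.add_sub_cancel]
    push_cast
    ring

theorem surjective_expDerivation_add_smul (c : ℝ) :
    Function.Surjective fun P => expDerivation P + c • P := by
  set L : MvPolynomial (Fin 2) ℝ →ₗ[ℝ] MvPolynomial (Fin 2) ℝ :=
    (expDerivation : MvPolynomial (Fin 2) ℝ →ₗ[ℝ] MvPolynomial (Fin 2) ℝ) + c • LinearMap.id
  have hL (a b : ℕ) : L (X 0 ^ a * X 1 ^ b) =
      (a : ℝ) • (X 0 ^ (a - 1) * X 1 ^ b) + (c - b) • (X 0 ^ a * X 1 ^ b) := by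
    simp only [L, LinearMap.add_apply, Derivation.coeFn_coe, expDerivation_X_pow_mul_X_pow,
      LinearMap.smul_apply, LinearMap.id_apply]
    module
  -- On `X₀ᵃ X₁ᵇ` the map is `c - b` plus a lowering of `a`: triangular for `b ≠ c`,
  -- and integration in `X₀` for `b = c`.
  have hmono (a b : ℕ) : X 0 ^ a * X 1 ^ b ∈ LinearMap.range L := by
    by_cases hb : (b : ℝ) = c
    · refine ⟨((a : ℝ) + 1)⁻¹ • (X 0 ^ (a + 1) * X 1 ^ b), ?_⟩
      rw [map_smul, hL, hb, sub_self, zero_smul, add_zero, Nat.add_sub_cancel, smul_smul]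
      push_cast
      rw [inv_mul_cancel₀ (by positivity), one_smul]
    · have hcb : c - b ≠ 0 := sub_ne_zero.mpr (Ne.symm hb)
      induction a with
      | zero => exact ⟨(c - b)⁻¹ • (X 0 ^ 0 * X 1 ^ b), by rw [map_smul, hL]; simp [smul_smul, hcb]⟩
      | succ a ih =>
        have h := sub_mem (LinearMap.mem_range_self L (X 0 ^ (a + 1) * X 1 ^ b))
          (Submodule.smul_mem _ ((a : ℝ) + 1) ih)
        rw [hL, Nat.add_sub_cancel] at h
        push_cast at h
        simpa [smul_smul, hcb] using Submodule.smul_mem _ (c - b)⁻¹ h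
  have hrange : LinearMap.range L = ⊤ := by
    refine Submodule.eq_top_iff'.mpr fun Q => ?_
    induction Q using MvPolynomial.induction_on' with
    | monomial u r =>
      rw [monomial_eq, Finsupp.prod_fintype _ _ (fun _ => pow_zero _), Fin.prod_univ_two,
        ← smul_eq_C_mul]
      exact Submodule.smul_mem _ r (hmono _ _)
    | add p q hp hq => exact add_mem hp hq
  exact LinearMap.range_eq_top.mp hrange

theorem eq_mul_exp_of_hasDerivAt {f : ℝ → ℝ} {c : ℝ} (hf : ContinuousOn f (Ici 0))
    (hf' : ∀ t, 0 < t → HasDerivAt f (-c * f t) t) {t : ℝ} (ht : 0 ≤ t) :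
    f t = f 0 * Real.exp (-(c * t)) := by
  rcases ht.eq_or_lt with rfl | ht
  · simp
  set u : ℝ → ℝ := fun s => f s * Real.exp (c * s)
  have hu' (s : ℝ) (hs : 0 < s) : HasDerivAt u 0 s := by
    refine ((hf' s hs).fun_mul ((hasDerivAt_id' s).const_mul c).exp).congr_deriv ?_
    ring
  obtain ⟨ξ, -, hξ⟩ := exists_hasDerivAt_eq_slope u (fun _ => 0) ht
    ((hf.mono Icc_subset_Ici_self).mul (by fun_prop)) fun s hs => hu' s hs.1
  have hu : u t = u 0 := by
    rw [eq_comm, div_eq_zero_iff, sub_eq_zero] at hξ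
    exact hξ.resolve_right (by linarith)
  calc f t = u t * Real.exp (-(c * t)) := by simp [u, mul_assoc, ← Real.exp_add]
    _ = f 0 * Real.exp (-(c * t)) := by simp [hu, u]

theorem mem_expPolynomials_of_hasDerivAt (n : ℕ) {f q : ℝ → ℝ} (hq : q ∈ expPolynomials)
    (hf : ContinuousOn f (Ici 0)) (hf' : ∀ t, 0 < t → HasDerivAt f (-n * f t + q t) t) :
    f ∈ expPolynomials := by
  obtain ⟨Q, hQ⟩ := mem_polynomialsAlong.mp hq
  obtain ⟨P, hP⟩ := surjective_expDerivation_add_smul n Q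
  set p : ℝ → ℝ := fun t => eval ![t, Real.exp (-t)] P
  have hp' (t : ℝ) : HasDerivAt p (-n * p t + eval ![t, Real.exp (-t)] Q) t := by
    refine (hasDerivAt_eval_exp P t).congr_deriv ?_
    simp [← hP, p, Algebra.smul_def]
  have hfp (t : ℝ) (ht : 0 < t) : HasDerivAt (f - p) (-n * (f - p) t) t := by
    refine ((hf' t ht).sub (hp' t)).congr_deriv ?_
    simp only [hQ ht.le, Pi.sub_apply]
    ring
  have hp : Continuous p := continuous_iff_continuousAt.mpr fun t => (hp' t).continuousAt
  refine ⟨P + C (f 0 - p 0) * X 1 ^ n, fun t ht => ?_⟩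
  have h := eq_mul_exp_of_hasDerivAt (hf.sub hp.continuousOn) hfp ht
  rw [← mul_neg, Real.exp_nat_mul] at h
  simp only [Pi.sub_apply, p] at h
  simp only [map_add, map_mul, map_pow, eval_C, eval_X, Matrix.cons_val_one, Matrix.cons_val_fin_one]
  linarith

theorem stmt5_general (α β : ℝ)
    (g : ℕ → ℝ → ℝ)
    (hg0 : ∀ t : ℝ, g 0 t = α + β)
    (hcont : ∀ n : ℕ, ContinuousOn (g n) (Set.Ici 0))
    (hode1 : ∀ t : ℝ, 0 < t → HasDerivAt (g 1) (-(g 1 t) + α * β) t)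
    (hoden : ∀ n : ℕ, 2 ≤ n → ∀ t : ℝ, 0 < t → HasDerivAt (g n)
      (-(n : ℝ) * (g n t - ∑ j ∈ Finset.Ico 1 n, (g j t - g (j - 1) t) * g (n - j) t)) t)
    (n : ℕ) :
    ∃ P : MvPolynomial (Fin 2) ℝ, ∀ t : ℝ, 0 ≤ t →
      g n t = MvPolynomial.eval ![t, Real.exp (-t)] P := by
  suffices h : ∀ m, g m ∈ expPolynomials from
    (mem_polynomialsAlong.mp (h n)).imp fun _ hP _ => @hP _
  intro m
  induction m using Nat.strong_induction_on with
  | _ m ih =>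
    match m with
    | 0 =>
      rw [show g 0 = algebraMap ℝ (ℝ → ℝ) (α + β) from funext hg0]
      exact algebraMap_mem _ _
    | 1 =>
      refine mem_expPolynomials_of_hasDerivAt 1 (algebraMap_mem _ (α * β)) (hcont 1) fun t ht => ?_
      simpa using hode1 t ht
    | k + 2 =>
      have hforcing : ((k + 2 : ℕ) : ℝ) •
          ∑ j ∈ Finset.Ico 1 (k + 2), (g j - g (j - 1)) * g (k + 2 - j) ∈ expPolynomials :=
        Subalgebra.smul_mem _ (Subalgebra.sum_mem _ fun j hj => by
          rw [Finset.mem_Ico] at hj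
          exact mul_mem (sub_mem (ih j (by omega)) (ih _ (by omega))) (ih _ (by omega))) _
      refine mem_expPolynomials_of_hasDerivAt (k + 2) hforcing (hcont _) fun t ht => ?_
      refine (hoden _ (by omega) t ht).congr_deriv ?_
      simp only [Pi.smul_apply, Finset.sum_apply, Pi.mul_apply, Pi.sub_apply, smul_eq_mul]
      push_cast
      ring

/-- Solutions of the moment ODE system of the liberation process are polynomials in
`t` and `e^{-t}`:  if `g₁' = -g₁ + αβ` and, with the convention `g₀ ≡ α+β`,
`gₙ' = -n[gₙ - ∑_{j=1}^{n-1}(g_j - g_{j-1}) g_{n-j}]` for `n ≥ 2` (all `gₙ`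
continuous on `[0,∞)` and differentiable on `(0,∞)`), then for every `n ≥ 1` there
is a real polynomial `Pₙ` in two variables with `gₙ(t) = Pₙ(t, e^{-t})` for `t ≥ 0`. -/
theorem stmt5 (α β : ℝ) (hα : α ∈ Set.Icc (0:ℝ) 1) (hβ : β ∈ Set.Icc (0:ℝ) 1)
    (g : ℕ → ℝ → ℝ)
    (hg0 : ∀ t : ℝ, g 0 t = α + β)
    (hcont : ∀ n : ℕ, ContinuousOn (g n) (Set.Ici 0))
    (hode1 : ∀ t : ℝ, 0 < t → HasDerivAt (g 1) (-(g 1 t) + α * β) t)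
    (hoden : ∀ n : ℕ, 2 ≤ n → ∀ t : ℝ, 0 < t → HasDerivAt (g n)
      (-(n : ℝ) * (g n t - ∑ j ∈ Finset.Ico 1 n, (g j t - g (j - 1) t) * g (n - j) t)) t)
    (n : ℕ) (hn : 1 ≤ n) :
    ∃ P : MvPolynomial (Fin 2) ℝ, ∀ t : ℝ, 0 ≤ t →
      g n t = MvPolynomial.eval ![t, Real.exp (-t)] P :=
  stmt5_general α β g hg0 hcont hode1 hoden n
end

section
/- Define M(w) = (1/2) e^{-2w} (e^{2w} + 1/2)² on ℂ and S = {w = u+iv : u > (1/2)ln(1/2), 0 < v < π/2}. Then M restricted to S is injective and M(S) equals the open upper half-plane ℂ₊. -/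
/-!
Writing `z = e^{2w}`, we have `M(w) = ½ (z + (1/2)² / z) + ½`. The map `w ↦ e^{2w}` sends `S`
bijectively onto the part of the upper half-plane outside the closed disc of radius `1/2`,
and the Joukowski map `z ↦ z + r² / z` sends that region bijectively onto `ℂ₊`: its imaginary
part is `Im z · (|z|² - r²) / |z|²`, and of the two preimages `z`, `r² / z` of a point, which
have product `r²`, exactly one lies outside the disc when the point is off the real axis.
-/

open Complex Set

noncomputable def joukowski (r : ℝ) (z : ℂ) : ℂ := z + (r : ℂ) ^ 2 / z

theorem joukowski_im (r : ℝ) {z : ℂ} (hz : z ≠ 0) :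
    (joukowski r z).im = z.im * (‖z‖ ^ 2 - r ^ 2) / ‖z‖ ^ 2 := by
  have hz' : ‖z‖ ^ 2 ≠ 0 := by positivity
  simp only [joukowski, add_im, div_im, ← ofReal_pow, ofReal_re, ofReal_im, normSq_eq_norm_sq]
  field_simp
  ring

theorem joukowski_div_self {r : ℝ} (hr : r ≠ 0) {z : ℂ} (hz : z ≠ 0) :
    joukowski r (r ^ 2 / z) = joukowski r z := by
  have hr' : (r : ℂ) ≠ 0 := ofReal_ne_zero.mpr hr
  simp only [joukowski]
  field_simp
  ring

theorem joukowski_eq_joukowski_iff (r : ℝ) {z w : ℂ} (hz : z ≠ 0) (hw : w ≠ 0) :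
    joukowski r z = joukowski r w ↔ z = w ∨ z * w = r ^ 2 := by
  rw [← sub_eq_zero, ← sub_eq_zero (a := z), ← sub_eq_zero (a := z * w), ← mul_eq_zero]
  constructor <;> intro h
  · simp only [joukowski] at h
    field_simp at h
    linear_combination h
  · simp only [joukowski]
    field_simp
    linear_combination h

theorem exists_joukowski_eq {r : ℝ} (hr : r ≠ 0) (t : ℂ) : ∃ z ≠ 0, joukowski r z = t := by
  obtain ⟨z, hz⟩ := exists_quadratic_eq_zero one_ne_zero (IsAlgClosed.exists_eq_mul_self
    (discrim 1 (-t) ((r : ℂ) ^ 2)))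
  have hz0 : z ≠ 0 := by rintro rfl; exact hr (by simpa using hz)
  refine ⟨z, hz0, ?_⟩
  simp only [joukowski]
  field_simp
  linear_combination hz

theorem im_pos_of_joukowski_im_pos {r : ℝ} (hr : 0 ≤ r) {z : ℂ} (hz : r < ‖z‖)
    (ht : 0 < (joukowski r z).im) : 0 < z.im := by
  have hz0 : z ≠ 0 := norm_pos_iff.mp (hr.trans_lt hz)
  have hsq : r ^ 2 < ‖z‖ ^ 2 := pow_lt_pow_left₀ hz hr two_ne_zero
  rw [joukowski_im r hz0] at ht
  exact pos_of_mul_pos_left ((div_pos_iff_of_pos_right (by positivity)).mp ht) (by linarith)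

theorem joukowski_bijOn {r : ℝ} (hr : 0 < r) :
    BijOn (joukowski r) {z | r < ‖z‖ ∧ 0 < z.im} {t | 0 < t.im} := by
  refine ⟨fun z ⟨hz, hzim⟩ => ?_, fun z ⟨hz, _⟩ w ⟨hw, _⟩ hzw => ?_, fun t ht => ?_⟩
  · have hsq : r ^ 2 < ‖z‖ ^ 2 := pow_lt_pow_left₀ hz hr.le two_ne_zero
    have hz0 : z ≠ 0 := norm_pos_iff.mp (hr.trans hz)
    show 0 < (joukowski r z).im
    rw [joukowski_im r hz0]
    exact div_pos (mul_pos hzim (by linarith)) (by positivity)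
  · have hz0 : z ≠ 0 := norm_pos_iff.mp (hr.trans hz)
    have hw0 : w ≠ 0 := norm_pos_iff.mp (hr.trans hw)
    refine ((joukowski_eq_joukowski_iff r hz0 hw0).mp hzw).resolve_right fun h => ?_
    have : ‖z * w‖ = r ^ 2 := by rw [h]; simp [sq_abs]
    rw [norm_mul] at this
    nlinarith
  · obtain ⟨z, hz0, rfl⟩ := exists_joukowski_eq hr.ne' t
    have hzr : ‖z‖ ≠ r := by
      intro h
      rw [Set.mem_ofPred_eq, joukowski_im r hz0, h] at ht
      simp at ht
    rcases hzr.lt_or_gt with h | h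
    · refine ⟨r ^ 2 / z, ?_, joukowski_div_self hr.ne' hz0⟩
      have hw : r < ‖(r : ℂ) ^ 2 / z‖ := by
        rw [norm_div, norm_pow, norm_real, Real.norm_eq_abs, abs_of_pos hr,
          lt_div_iff₀ (norm_pos_iff.mpr hz0)]
        nlinarith
      exact ⟨hw, im_pos_of_joukowski_im_pos hr.le hw (by rwa [joukowski_div_self hr.ne' hz0])⟩
    · exact ⟨z, ⟨h, im_pos_of_joukowski_im_pos hr.le h ht⟩, rfl⟩

theorem exp_bijOn_halfStrip {r : ℝ} (hr : 0 < r) :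
    BijOn exp {w | Real.log r < w.re ∧ 0 < w.im ∧ w.im < Real.pi} {z | r < ‖z‖ ∧ 0 < z.im} := by
  refine ⟨fun w ⟨hre, him, him'⟩ => ⟨?_, ?_⟩, fun w ⟨_, hw, hw'⟩ v ⟨_, hv, hv'⟩ h => ?_,
    fun z ⟨hz, hzim⟩ => ⟨log z, ⟨?_, ?_, ?_⟩, exp_log (norm_pos_iff.mp (hr.trans hz))⟩⟩
  · rwa [norm_exp, ← Real.log_lt_iff_lt_exp hr]
  · rw [exp_im]
    exact mul_pos (Real.exp_pos _) (Real.sin_pos_of_pos_of_lt_pi him him')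
  · exact exp_inj_of_neg_pi_lt_of_le_pi (by linarith) hw'.le (by linarith) hv'.le h
  · rw [log_re]
    exact Real.log_lt_log hr hz
  · rw [log_im]
    exact (arg_nonneg_iff.mpr hzim.le).lt_of_ne fun h => hzim.ne' (arg_eq_zero_iff.mp h.symm).2
  · rw [log_im]
    exact (arg_le_pi z).lt_of_ne fun h => hzim.ne' (arg_eq_pi_iff.mp h).2

theorem two_mul_bijOn_halfStrip (a b : ℝ) :
    BijOn (2 * ·) {w : ℂ | (1 / 2) * a < w.re ∧ 0 < w.im ∧ w.im < b / 2}
      {w | a < w.re ∧ 0 < w.im ∧ w.im < b} := by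
  refine ⟨fun w ⟨hre, him, him'⟩ => ?_, fun w _ v _ h => mul_left_cancel₀ two_ne_zero h,
    fun w ⟨hre, him, him'⟩ => ⟨w / 2, ?_, mul_div_cancel₀ w two_ne_zero⟩⟩
  · simp only [Set.mem_ofPred_eq, mul_re, mul_im, re_ofNat, im_ofNat]
    refine ⟨?_, ?_, ?_⟩ <;> linarith
  · simp only [Set.mem_ofPred_eq, div_ofNat_re, div_ofNat_im]
    refine ⟨?_, ?_, ?_⟩ <;> linarith

theorem affine_bijOn_upperHalfPlane {a : ℝ} (ha : 0 < a) (b : ℝ) :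
    BijOn (fun t : ℂ => a * t + b) {t | 0 < t.im} {t | 0 < t.im} := by
  have ha' : (a : ℂ) ≠ 0 := ofReal_ne_zero.mpr ha.ne'
  refine ⟨fun t ht => ?_, fun s _ t _ h => ?_, fun t ht => ⟨(t - b) / a, ?_, ?_⟩⟩
  · simpa [Set.mem_ofPred_eq, mul_im] using mul_pos ha ht
  · simpa [ha'] using h
  · simpa [Set.mem_ofPred_eq, div_ofReal_im, sub_im] using div_pos ht ha
  · field_simp
    ring

/-- Let `M(w) = (1/2) e^{-2w}(e^{2w} + 1/2)²` and let
`S = {u+iv : u > (1/2)ln(1/2), 0 < v < π/2}`.  Then `M` restricted to `S` is injective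
and `M(S)` is the open upper half-plane. -/
theorem stmt10 :
    Set.InjOn (fun w : ℂ => (1/2) * Complex.exp (-2 * w) * (Complex.exp (2 * w) + 1/2) ^ 2)
      {w : ℂ | (1/2) * Real.log (1/2) < w.re ∧ 0 < w.im ∧ w.im < Real.pi / 2} ∧
    (fun w : ℂ => (1/2) * Complex.exp (-2 * w) * (Complex.exp (2 * w) + 1/2) ^ 2) ''
      {w : ℂ | (1/2) * Real.log (1/2) < w.re ∧ 0 < w.im ∧ w.im < Real.pi / 2} =
      {z : ℂ | 0 < z.im} := by
  have hM : (fun w : ℂ => (1/2) * exp (-2 * w) * (exp (2 * w) + 1/2) ^ 2) =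
      (fun t : ℂ => ((1/2 : ℝ) : ℂ) * t + ((1/2 : ℝ) : ℂ)) ∘ joukowski (1/2) ∘ exp ∘ (2 * ·) := by
    funext w
    have hexp : exp (-2 * w) = (exp (2 * w))⁻¹ := by rw [← exp_neg, neg_mul]
    have hz : exp (2 * w) ≠ 0 := exp_ne_zero _
    simp only [Function.comp_apply, joukowski, hexp]
    push_cast
    field_simp
    ring
  have hbij := hM ▸ (affine_bijOn_upperHalfPlane one_half_pos (1/2)).comp
    ((joukowski_bijOn one_half_pos).comp
      ((exp_bijOn_halfStrip one_half_pos).comp (two_mul_bijOn_halfStrip _ _)))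
  exact ⟨hbij.injOn, hbij.image_eq⟩
end

section
/- Define L(z) = (1/2) log(z - 1/2 + √z·√(z-1)) for z in the upper half-plane ℂ₊, using the principal branches of log and square root. Then L is holomorphic and injective on ℂ₊, its image is the strip S = {u+iv : u > (1/2)ln(1/2), 0 < v < π/2}, and L'(z) = 1/(2√z·√(z-1)) for all z ∈ ℂ₊. -/
/-- `L(z) = (1/2) log(z - 1/2 + √z √(z-1))`, with principal branches of `log` and of the
square root (realized by the principal complex power `w ^ (1/2)`). -/
noncomputable def Lfun (z : ℂ) : ℂ :=
  (1/2) * Complex.log (z - 1/2 + z ^ (1/2 : ℂ) * (z - 1) ^ (1/2 : ℂ))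

/-!
Write `s = √z √(z-1)` and `A = z - 1/2 + s`, so that `L = (1/2) log A`. Since `s² = z(z-1)`,
`A (z - 1/2 - s) = 1/4`, i.e. `A + 1/(4A) = 2z - 1`: the map `a ↦ (a + 1/(4a) + 1)/2` inverts `A`
on all of `ℂ`, which gives injectivity. On the upper half-plane both square roots lie in the
first quadrant, so `Im s > 0` and `Im A > 0`; as `Im (a + 1/(4a)) = Im a (1 - 1/(4|a|²))`, the
condition `Im z > 0` then becomes `|A| > 1/2`. Thus `A` maps `ℂ₊` onto
`{a | Im a > 0, |a| > 1/2}`, which `(1/2) log` maps onto the strip; the inverse image of `a` is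
found by choosing the root `(a - 1/(4a))/2` of `z(z-1)` with positive imaginary part. Finally
`s' = (2z-1)/(2s)` gives `A' = A/s` and `L' = 1/(2s)`.
-/

open Complex

namespace Complex

lemma im_add_ofReal_mul_inv (a : ℂ) (c : ℝ) :
    (a + c * a⁻¹).im = a.im * (1 - c / normSq a) := by
  simp only [add_im, im_ofReal_mul, inv_im]
  ring

lemma half_lt_norm_iff_im_add_inv_pos {a : ℂ} (ha : 0 < a.im) :
    1 / 2 < ‖a‖ ↔ 0 < (a + (4 : ℝ)⁻¹ * a⁻¹).im := by
  have hpos : 0 < normSq a := normSq_pos.2 fun h => by simp [h] at ha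
  rw [im_add_ofReal_mul_inv, mul_pos_iff_of_pos_left ha, sub_pos, div_lt_one hpos,
    normSq_eq_norm_sq, show (4 : ℝ)⁻¹ = (1 / 2) ^ 2 by norm_num,
    sq_lt_sq₀ (by norm_num) (norm_nonneg a)]

lemma im_sub_inv_pos {a : ℂ} (ha : 0 < a.im) : 0 < (a - (4 : ℝ)⁻¹ * a⁻¹).im := by
  have h := im_add_ofReal_mul_inv a (-4⁻¹)
  rw [ofReal_neg, neg_mul, ← sub_eq_add_neg] at h
  rw [h, neg_div, sub_neg_eq_add]
  exact mul_pos ha (by have := normSq_nonneg a; positivity)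

lemma arg_pos_of_im_pos {z : ℂ} (hz : 0 < z.im) : 0 < z.arg :=
  (arg_nonneg_iff.2 hz.le).lt_of_ne fun h => hz.ne' (arg_eq_zero_iff.1 h.symm).2

lemma cpow_half_mul_self (z : ℂ) : z ^ (1/2 : ℂ) * z ^ (1/2 : ℂ) = z := by
  simp [← sq]

lemma re_pos_and_im_pos_cpow_half {z : ℂ} (hz : 0 < z.im) :
    0 < (z ^ (1/2 : ℂ)).re ∧ 0 < (z ^ (1/2 : ℂ)).im := by
  have h0 : z ≠ 0 := fun h => by simp [h] at hz
  have harg := arg_pos_of_im_pos hz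
  have hpi := arg_lt_pi_iff.2 (Or.inr hz.ne')
  rw [cpow_def_of_ne_zero h0, exp_re, exp_im]
  have him : (log z * (1/2 : ℂ)).im = z.arg / 2 := by simp [log_im, div_eq_mul_inv]
  rw [him]
  exact ⟨mul_pos (Real.exp_pos _) (Real.cos_pos_of_mem_Ioo ⟨by linarith, by linarith⟩),
    mul_pos (Real.exp_pos _) (Real.sin_pos_of_pos_of_lt_pi (by linarith) (by linarith))⟩

lemma eq_of_mul_self_eq_of_im_pos {s t : ℂ} (h : s * s = t * t) (hs : 0 < s.im)
    (ht : 0 < t.im) : s = t :=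
  (mul_self_eq_mul_self_iff.1 h).resolve_right fun h' => by
    rw [h', neg_im] at hs; linarith

lemma hasDerivAt_cpow_half {z : ℂ} (hz : z ∈ slitPlane) :
    HasDerivAt (fun w : ℂ => w ^ (1/2 : ℂ)) (z ^ (1/2 : ℂ) / (2 * z)) z := by
  refine (hasStrictDerivAt_cpow_const (c := 1/2) hz).hasDerivAt.congr_deriv ?_
  rw [cpow_sub _ _ (slitPlane_ne_zero hz), cpow_one]
  ring

end Complex

noncomputable def sqrtProd (z : ℂ) : ℂ := z ^ (1/2 : ℂ) * (z - 1) ^ (1/2 : ℂ)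

noncomputable def lfunArg (z : ℂ) : ℂ := z - 1/2 + sqrtProd z

noncomputable def lfunArgInv (a : ℂ) : ℂ := (a + (4 : ℝ)⁻¹ * a⁻¹ + 1) / 2

lemma Lfun_eq_half_mul_log_lfunArg (z : ℂ) : Lfun z = 1/2 * log (lfunArg z) := rfl

lemma sqrtProd_mul_self (z : ℂ) : sqrtProd z * sqrtProd z = z * (z - 1) := by
  rw [sqrtProd, mul_mul_mul_comm, cpow_half_mul_self, cpow_half_mul_self]

lemma sqrtProd_im_pos {z : ℂ} (hz : 0 < z.im) : 0 < (sqrtProd z).im := by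
  obtain ⟨ar, ai⟩ := re_pos_and_im_pos_cpow_half hz
  obtain ⟨br, bi⟩ := re_pos_and_im_pos_cpow_half (z := z - 1) (by simpa using hz)
  rw [sqrtProd, mul_im]
  positivity

lemma lfunArg_im_pos {z : ℂ} (hz : 0 < z.im) : 0 < (lfunArg z).im := by
  simpa [lfunArg] using add_pos hz (sqrtProd_im_pos hz)

lemma lfunArg_mul_sub_sqrtProd (z : ℂ) : lfunArg z * (z - 1/2 - sqrtProd z) = 1/4 := by
  rw [lfunArg]
  linear_combination -sqrtProd_mul_self z

lemma lfunArg_ne_zero (z : ℂ) : lfunArg z ≠ 0 := fun h => by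
  simpa [h] using lfunArg_mul_sub_sqrtProd z

lemma lfunArg_add_inv (z : ℂ) : lfunArg z + (4 : ℝ)⁻¹ * (lfunArg z)⁻¹ = 2 * z - 1 := by
  have h := lfunArg_mul_sub_sqrtProd z
  have hA := lfunArg_ne_zero z
  push_cast
  field_simp
  rw [lfunArg] at *
  linear_combination -4 * h

lemma lfunArgInv_lfunArg (z : ℂ) : lfunArgInv (lfunArg z) = z := by
  rw [lfunArgInv, lfunArg_add_inv]
  ring

lemma half_lt_norm_lfunArg {z : ℂ} (hz : 0 < z.im) : 1/2 < ‖lfunArg z‖ := by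
  rw [half_lt_norm_iff_im_add_inv_pos (lfunArg_im_pos hz), lfunArg_add_inv]
  simpa using hz

lemma im_lfunArgInv_pos {a : ℂ} (ha : 0 < a.im) (ha' : 1/2 < ‖a‖) :
    0 < (lfunArgInv a).im := by
  have := (half_lt_norm_iff_im_add_inv_pos ha).1 ha'
  rw [lfunArgInv, div_ofNat_im, add_im, one_im]
  linarith

lemma lfunArg_lfunArgInv {a : ℂ} (ha : 0 < a.im) (ha' : 1/2 < ‖a‖) :
    lfunArg (lfunArgInv a) = a := by
  have hz := im_lfunArgInv_pos ha ha'
  have ha0 : a ≠ 0 := fun h => by simp [h] at ha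
  have hroot : sqrtProd (lfunArgInv a) = (a - (4 : ℝ)⁻¹ * a⁻¹) / 2 := by
    refine eq_of_mul_self_eq_of_im_pos ?_ (sqrtProd_im_pos hz)
      (by simpa using im_sub_inv_pos ha)
    rw [sqrtProd_mul_self, lfunArgInv]
    push_cast
    field_simp
    ring
  rw [lfunArg, hroot, lfunArgInv]
  ring

lemma exp_two_mul_Lfun (z : ℂ) : exp (2 * Lfun z) = lfunArg z := by
  rw [Lfun_eq_half_mul_log_lfunArg, ← mul_assoc]
  norm_num [exp_log (lfunArg_ne_zero z)]

lemma Lfun_injective : Function.Injective Lfun := fun z₁ z₂ h => by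
  rw [← lfunArgInv_lfunArg z₁, ← lfunArgInv_lfunArg z₂, ← exp_two_mul_Lfun,
    ← exp_two_mul_Lfun, h]

lemma Lfun_mem_strip {z : ℂ} (hz : 0 < z.im) :
    1/2 * Real.log (1/2) < (Lfun z).re ∧ 0 < (Lfun z).im ∧ (Lfun z).im < Real.pi / 2 := by
  have hA := lfunArg_im_pos hz
  have hlog := Real.log_lt_log (by norm_num) (half_lt_norm_lfunArg hz)
  have harg := arg_pos_of_im_pos hA
  have hpi := arg_lt_pi_iff.2 (Or.inr hA.ne')
  have hre : (Lfun z).re = 1/2 * Real.log ‖lfunArg z‖ := by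
    simp [Lfun_eq_half_mul_log_lfunArg, log_re]
  have him : (Lfun z).im = 1/2 * (lfunArg z).arg := by
    simp [Lfun_eq_half_mul_log_lfunArg, log_im]
  rw [hre, him]
  refine ⟨?_, ?_, ?_⟩ <;> linarith

lemma exists_Lfun_eq_of_mem_strip {w : ℂ} (hre : 1/2 * Real.log (1/2) < w.re) (him : 0 < w.im)
    (him' : w.im < Real.pi / 2) : ∃ z, 0 < z.im ∧ Lfun z = w := by
  have h2re : (2 * w).re = 2 * w.re := by simp
  have h2im : (2 * w).im = 2 * w.im := by simp
  have hsin : 0 < Real.sin (2 * w.im) :=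
    Real.sin_pos_of_pos_of_lt_pi (by linarith) (by linarith)
  have ha : 0 < (exp (2 * w)).im := by
    rw [exp_im, h2re, h2im]
    exact mul_pos (Real.exp_pos _) hsin
  have ha' : 1/2 < ‖exp (2 * w)‖ := by
    rw [norm_exp, ← Real.exp_log (by norm_num : (0 : ℝ) < 1/2)]
    exact Real.exp_lt_exp.2 (by linarith)
  refine ⟨lfunArgInv (exp (2 * w)), im_lfunArgInv_pos ha ha', ?_⟩
  rw [Lfun_eq_half_mul_log_lfunArg, lfunArg_lfunArgInv ha ha',
    log_exp (by linarith [Real.pi_pos]) (by linarith)]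
  ring

lemma hasDerivAt_sqrtProd {z : ℂ} (hz : z ∈ slitPlane) (hz₁ : z - 1 ∈ slitPlane) :
    HasDerivAt sqrtProd ((2 * z - 1) / (2 * sqrtProd z)) z := by
  have h0 := slitPlane_ne_zero hz
  have h1 := slitPlane_ne_zero hz₁
  have hs : sqrtProd z ≠ 0 := fun h => mul_ne_zero h0 h1 <| by
    rw [← sqrtProd_mul_self, h, zero_mul]
  have hd := (hasDerivAt_cpow_half hz).mul
    ((hasDerivAt_cpow_half hz₁).comp z ((hasDerivAt_id z).sub_const 1))
  refine hd.congr_deriv ?_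
  have hsq := sqrtProd_mul_self z
  simp only [Function.comp_apply, id, mul_one]
  rw [sqrtProd] at hs hsq ⊢
  obtain ⟨ha, hb⟩ := mul_ne_zero_iff.1 hs
  field_simp
  linear_combination (2 * z - 1) * hsq

lemma hasDerivAt_Lfun {z : ℂ} (hz : 0 < z.im) :
    HasDerivAt Lfun (1 / (2 * sqrtProd z)) z := by
  have hs := hasDerivAt_sqrtProd (z := z) (.inr hz.ne') (.inr (by simpa using hz.ne'))
  have hA := (hasDerivAt_log (.inr (lfunArg_im_pos hz).ne')).comp z
    (((hasDerivAt_id z).sub_const (1/2 : ℂ)).add hs)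
  refine (hA.const_mul (1/2 : ℂ)).congr_deriv ?_
  have hs0 : sqrtProd z ≠ 0 := fun h => by simpa [h] using sqrtProd_im_pos hz
  rw [show 1 + (2 * z - 1) / (2 * sqrtProd z) = lfunArg z / sqrtProd z by
    rw [lfunArg]; field_simp; ring]
  field_simp [lfunArg_ne_zero z]

/-- `L` is holomorphic and injective on the upper half-plane, its image is the strip
`S = {u+iv : u > (1/2)ln(1/2), 0 < v < π/2}`, and `L'(z) = 1/(2√z√(z-1))`. -/
theorem stmt11 :
    DifferentiableOn ℂ Lfun {z : ℂ | 0 < z.im} ∧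
    Set.InjOn Lfun {z : ℂ | 0 < z.im} ∧
    Lfun '' {z : ℂ | 0 < z.im} =
      {w : ℂ | (1/2) * Real.log (1/2) < w.re ∧ 0 < w.im ∧ w.im < Real.pi / 2} ∧
    ∀ z ∈ {z : ℂ | 0 < z.im},
      HasDerivAt Lfun (1 / (2 * (z ^ (1/2 : ℂ) * (z - 1) ^ (1/2 : ℂ)))) z := by
  refine ⟨fun z hz => (hasDerivAt_Lfun hz).differentiableAt.differentiableWithinAt,
    Lfun_injective.injOn, ?_, fun z hz => hasDerivAt_Lfun hz⟩
  ext w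
  constructor
  · rintro ⟨z, hz, rfl⟩
    exact Lfun_mem_strip hz
  · rintro ⟨hre, him, him'⟩
    exact exists_Lfun_eq_of_mem_strip hre him him'
end
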